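/- The group PSL₂(ℤ) is isomorphic to the free product ℤ/2 * ℤ/3. -/

import Mathlib

/-- PSL₂(ℤ): the quotient of SL₂(ℤ) by its center {±I}. -/
abbrev PSL2Z : Type :=
  Matrix.SpecialLinearGroup (Fin 2) ℤ ⧸
    Subgroup.center (Matrix.SpecialLinearGroup (Fin 2) ℤ)

/-!
The images `σ`, `ρ` of `S` and `TS` in PSL₂(ℤ) satisfy `σ² = ρ³ = 1`, so they define a map
ℤ/2 ∗ ℤ/3 → PSL₂(ℤ); it is onto because `S` and `T = (TS)S⁻¹` generate SL₂(ℤ). Injectivity is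
the ping-pong lemma for the action on the upper half-plane: `z ↦ -1/z` maps `{Re z > 0}` into
`{Re z < 0}`, while `z ↦ 1 - 1/z` and its inverse `z ↦ -1/(z - 1)` map `{Re z < 0}` into
`{Re z > 0}`.
-/

open MatrixGroups ModularGroup UpperHalfPlane Cardinal Pointwise

universe u

namespace Monoid.Coprod

variable {M N : Type u} [Group M] [Group N]

instance instGroupCond : ∀ b : Bool, Group (cond b M N)
  | true => ‹Group M›
  | false => ‹Group N›

def mulEquivCoprodI : Monoid.Coprod M N ≃* CoprodI (fun b => cond b M N) :=
  MonoidHom.toMulEquiv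
    (lift (CoprodI.of (M := fun b => cond b M N) (i := true))
      (CoprodI.of (M := fun b => cond b M N) (i := false)))
    (CoprodI.lift fun | true => inl | false => inr)
    (hom_ext (MonoidHom.ext fun _ => rfl) (MonoidHom.ext fun _ => rfl))
    (CoprodI.ext_hom _ _ fun | true => MonoidHom.ext fun _ => rfl
                             | false => MonoidHom.ext fun _ => rfl)

theorem lift_injective_of_ping_pong {G α : Type*} [Group G] [MulAction G α]
    (f₁ : M →* G) (f₂ : N →* G) (hcard : 3 ≤ #M ∨ 3 ≤ #N)
    (X₁ X₂ : Set α) (hX₁ : X₁.Nonempty) (hX₂ : X₂.Nonempty) (hX : Disjoint X₁ X₂)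
    (hpp₁ : ∀ h, h ≠ 1 → f₁ h • X₂ ⊆ X₁) (hpp₂ : ∀ h, h ≠ 1 → f₂ h • X₁ ⊆ X₂) :
    Function.Injective (lift f₁ f₂) := by
  have hlift : lift f₁ f₂ =
      (CoprodI.lift fun | true => f₁ | false => f₂).comp mulEquivCoprodI.toMonoidHom :=
    hom_ext (MonoidHom.ext fun _ => rfl) (MonoidHom.ext fun _ => rfl)
  rw [hlift, MonoidHom.coe_comp]
  refine Function.Injective.comp ?_ mulEquivCoprodI.injective
  refine CoprodI.lift_injective_of_ping_pong _ ?_ (fun | true => X₁ | false => X₂)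
    (fun | true => hX₁ | false => hX₂) ?_ ?_
  · exact hcard.elim (fun h => .inr ⟨true, h⟩) (fun h => .inr ⟨false, h⟩)
  · rintro (_ | _) (_ | _) hij
    exacts [absurd rfl hij, hX.symm, hX, absurd rfl hij]
  · rintro (_ | _) (_ | _) hij
    exacts [absurd rfl hij, hpp₂, hpp₁, absurd rfl hij]

end Monoid.Coprod

section ZModHom

variable {G : Type*} [Group G] {n : ℕ}

lemma ZMod.mem_zpowers_ofAdd_one (x : Multiplicative (ZMod n)) :
    x ∈ Subgroup.zpowers (Multiplicative.ofAdd 1) := by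
  obtain ⟨k, hk⟩ := ZMod.intCast_surjective x.toAdd
  exact Subgroup.mem_zpowers_iff.mpr ⟨k, by rw [← ofAdd_zsmul, zsmul_one, hk, ofAdd_toAdd]⟩

noncomputable def zmodHomOfPowEqOne (g : G) (hg : g ^ n = 1) : Multiplicative (ZMod n) →* G :=
  monoidHomOfForallMemZpowers ZMod.mem_zpowers_ofAdd_one
    (by simpa [orderOf_ofAdd_eq_addOrderOf, ZMod.addOrderOf_one] using orderOf_dvd_of_pow_eq_one hg)

@[simp]
lemma zmodHomOfPowEqOne_ofAdd_one (g : G) (hg : g ^ n = 1) :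
    zmodHomOfPowEqOne g hg (Multiplicative.ofAdd 1) = g :=
  monoidHomOfForallMemZpowers_apply_gen _ _

end ZModHom

namespace ModularGroup

lemma S_sq : S ^ 2 = -1 := by decide

lemma T_mul_S_pow_three : (T * S) ^ 3 = -1 := by decide

lemma S_inv_smul (z : ℍ) : S⁻¹ • z = S • z := by rw [S_inv, SL_neg_smul]

lemma re_S_smul (z : ℍ) : (S • z).re = -z.re / Complex.normSq z := by
  rw [← coe_re, modular_S_smul, coe_mk, Complex.inv_re, Complex.normSq_neg]
  rfl

lemma re_S_smul_neg {z : ℍ} (hz : 0 < z.re) : (S • z).re < 0 := by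
  rw [re_S_smul, neg_div]
  exact neg_neg_of_pos (div_pos hz z.normSq_pos)

lemma re_S_smul_pos {z : ℍ} (hz : z.re < 0) : 0 < (S • z).re := by
  rw [re_S_smul]
  exact div_pos (neg_pos.mpr hz) z.normSq_pos

lemma re_T_mul_S_smul_pos {z : ℍ} (hz : z.re < 0) : 0 < ((T * S) • z).re := by
  rw [mul_smul, re_T_smul]
  linarith [re_S_smul_pos hz]

lemma re_T_mul_S_inv_smul_pos {z : ℍ} (hz : z.re < 0) : 0 < ((T * S)⁻¹ • z).re := by
  rw [_root_.mul_inv_rev, mul_smul, S_inv_smul]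
  exact re_S_smul_pos (by rw [re_T_inv_smul]; linarith)

end ModularGroup

lemma SL2Z_smul_eq_self_of_mem_center {A : SL(2, ℤ)} (hA : A ∈ Subgroup.center SL(2, ℤ))
    (z : ℍ) : A • z = z := by
  obtain ⟨r, hr, hrA⟩ := Matrix.SpecialLinearGroup.mem_center_iff.mp hA
  rw [Fintype.card_fin, sq, mul_self_eq_one_iff] at hr
  obtain rfl | rfl := hr
  · obtain rfl : A = 1 := Subtype.ext (by simp [← hrA])
    exact one_smul _ z
  · obtain rfl : A = -1 := Subtype.ext (by simp [← hrA])
    rw [SL_neg_smul, one_smul]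

noncomputable instance : MulAction PSL2Z ℍ :=
  MulAction.compHom ℍ <| QuotientGroup.lift _ (MulAction.toPermHom SL(2, ℤ) ℍ)
    fun _ hA => Equiv.ext (SL2Z_smul_eq_self_of_mem_center hA)

namespace PSL2Z

lemma mk_smul (A : SL(2, ℤ)) (z : ℍ) : (A : PSL2Z) • z = A • z := rfl

lemma closure_S_T : Subgroup.closure {(S : PSL2Z), (T : PSL2Z)} = ⊤ := by
  have h := congrArg (Subgroup.map (QuotientGroup.mk' (Subgroup.center SL(2, ℤ))))
    _root_.SpecialLinearGroup.SL2Z_generators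
  rwa [MonoidHom.map_closure, Subgroup.map_top_of_surjective _ (QuotientGroup.mk'_surjective _),
    Set.image_pair] at h

lemma mk_pow_eq_one_of_pow_eq_neg_one {A : SL(2, ℤ)} {n : ℕ} (h : A ^ n = -1) :
    (A : PSL2Z) ^ n = 1 := by
  rw [← QuotientGroup.mk_pow, h, QuotientGroup.eq_one_iff]
  exact Subgroup.mem_center_iff.mpr fun B => by simp

noncomputable def ofFreeProduct :
    Monoid.Coprod (Multiplicative (ZMod 2)) (Multiplicative (ZMod 3)) →* PSL2Z :=
  Monoid.Coprod.lift (zmodHomOfPowEqOne _ (mk_pow_eq_one_of_pow_eq_neg_one S_sq))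
    (zmodHomOfPowEqOne _ (mk_pow_eq_one_of_pow_eq_neg_one T_mul_S_pow_three))

lemma ofFreeProduct_surjective : Function.Surjective ofFreeProduct := by
  rw [← MonoidHom.range_eq_top, eq_top_iff, ← closure_S_T, Subgroup.closure_le,
    Set.insert_subset_iff, Set.singleton_subset_iff]
  exact ⟨⟨.inl (.ofAdd 1), by simp [ofFreeProduct]⟩,
    ⟨.inr (.ofAdd 1) * (.inl (.ofAdd 1))⁻¹, by simp [ofFreeProduct]⟩⟩

lemma ofFreeProduct_injective : Function.Injective ofFreeProduct := by
  have hS : ∀ x : Multiplicative (ZMod 2), x ≠ 1 → x = .ofAdd 1 := by decide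
  have hTS : ∀ x : Multiplicative (ZMod 3), x ≠ 1 → x = .ofAdd 1 ∨ x = (.ofAdd 1)⁻¹ := by
    decide
  refine Monoid.Coprod.lift_injective_of_ping_pong _ _ (.inr (by simp))
    {z : ℍ | z.re < 0} {z : ℍ | 0 < z.re}
    ⟨T⁻¹ • I, by rw [Set.mem_ofPred_eq, re_T_inv_smul, I_re]; norm_num⟩
    ⟨T • I, by rw [Set.mem_ofPred_eq, re_T_smul, I_re]; norm_num⟩
    (Set.disjoint_left.mpr fun z (h₁ : z.re < 0) (h₂ : 0 < z.re) ↦ lt_asymm h₁ h₂) ?_ ?_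
  · intro x hx
    obtain rfl := hS x hx
    refine Set.smul_set_subset_iff.mpr fun z hz => ?_
    rw [zmodHomOfPowEqOne_ofAdd_one, mk_smul]
    exact re_S_smul_neg hz
  · intro x hx
    refine Set.smul_set_subset_iff.mpr fun z hz => ?_
    obtain rfl | rfl := hTS x hx
    · rw [zmodHomOfPowEqOne_ofAdd_one, mk_smul]
      exact re_T_mul_S_smul_pos hz
    · rw [map_inv, zmodHomOfPowEqOne_ofAdd_one, ← QuotientGroup.mk_inv, mk_smul]
      exact re_T_mul_S_inv_smul_pos hz

end PSL2Z

/-- PSL₂(ℤ) is isomorphic to the free product ℤ/2 * ℤ/3. -/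
theorem psl2z_iso_free_product :
    Nonempty (PSL2Z ≃* Monoid.Coprod (Multiplicative (ZMod 2)) (Multiplicative (ZMod 3))) :=
  ⟨(MulEquiv.ofBijective _ ⟨PSL2Z.ofFreeProduct_injective, PSL2Z.ofFreeProduct_surjective⟩).symm⟩
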